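/- Let γ>0, let u:𝕋²×[0,∞)→ℝ² be smooth, bounded with bounded gradient, and divergence-free, and let c be a smooth real-valued solution on 𝕋²×[0,∞) of the advective Cahn–Hilliard equation ∂ₜc + u·∇c + γΔ²c = Δ(c³ − c), with conserved spatial mean c̄. Let t₀≥0, μ>0, and τ∈(0, γ ln 2). If (1/τ)∫_{t₀}^{t₀+τ} ‖Δc(s)‖²_{L²(𝕋²)} ds ≥ ((2+2γμ)/γ²) ‖c(t₀) − c̄‖²_{L²(𝕋²)}, then ‖c(t₀+τ) − c̄‖_{L²(𝕋²)} ≤ e^{−μτ} ‖c(t₀) − c̄‖_{L²(𝕋²)}. -/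

import Mathlib

open MeasureTheory Set Real

/-- The Laplacian of a function of two real variables, written with iterated
one-dimensional derivatives. -/
noncomputable def lap2 (f : ℝ → ℝ → ℝ) (x₁ x₂ : ℝ) : ℝ :=
  deriv (deriv (fun y => f y x₂)) x₁ + deriv (deriv (fun y => f x₁ y)) x₂

/-- The squared `L²(𝕋²)` norm of a `2π`-periodic function, computed over the
fundamental domain `[0,2π]²`. -/
noncomputable def sqL2T2 (f : ℝ → ℝ → ℝ) : ℝ :=
  ∫ x₁ in (0:ℝ)..(2 * π), ∫ x₂ in (0:ℝ)..(2 * π), (f x₁ x₂) ^ 2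

/-- A smooth solution of the advective Cahn–Hilliard equation
`∂ₜc + u·∇c + γΔ²c = Δ(c³ − c)` on the torus `𝕋²` (identified with `2π`-periodic
functions on `ℝ²`), with a smooth, bounded, divergence-free stirring velocity `u`
with bounded gradient, and conserved spatial mean `c̄`. -/
structure IsAdvCahnHilliardSolution (γ : ℝ) (u : ℝ → ℝ → ℝ → ℝ × ℝ)
    (c : ℝ → ℝ → ℝ → ℝ) (cbar : ℝ) : Prop where
  uper : ∀ x₁ x₂ t, u (x₁ + 2 * π) x₂ t = u x₁ x₂ t ∧ u x₁ (x₂ + 2 * π) t = u x₁ x₂ t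
  cper : ∀ x₁ x₂ t, c (x₁ + 2 * π) x₂ t = c x₁ x₂ t ∧ c x₁ (x₂ + 2 * π) t = c x₁ x₂ t
  usmooth : ContDiffOn ℝ (⊤ : ℕ∞) (fun p : ℝ × ℝ × ℝ => u p.1 p.2.1 p.2.2)
    {p : ℝ × ℝ × ℝ | 0 ≤ p.2.2}
  csmooth : ContDiffOn ℝ (⊤ : ℕ∞) (fun p : ℝ × ℝ × ℝ => c p.1 p.2.1 p.2.2)
    {p : ℝ × ℝ × ℝ | 0 ≤ p.2.2}
  ubdd : ∃ M : ℝ, ∀ x₁ x₂ t : ℝ, 0 ≤ t →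
    ‖u x₁ x₂ t‖ ≤ M ∧ ‖deriv (fun y => u y x₂ t) x₁‖ ≤ M ∧ ‖deriv (fun y => u x₁ y t) x₂‖ ≤ M
  udivfree : ∀ x₁ x₂ t : ℝ, 0 ≤ t →
    deriv (fun y => (u y x₂ t).1) x₁ + deriv (fun y => (u x₁ y t).2) x₂ = 0
  pde : ∀ x₁ x₂ : ℝ, ∀ t > (0:ℝ),
    deriv (fun s => c x₁ x₂ s) t
      + (u x₁ x₂ t).1 * deriv (fun y => c y x₂ t) x₁
      + (u x₁ x₂ t).2 * deriv (fun y => c x₁ y t) x₂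
      + γ * lap2 (fun a b => lap2 (fun p q => c p q t) a b) x₁ x₂
      = lap2 (fun a b => (c a b t) ^ 3 - c a b t) x₁ x₂
  mean : ∀ t : ℝ, 0 ≤ t →
    (∫ x₁ in (0:ℝ)..(2 * π), ∫ x₂ in (0:ℝ)..(2 * π), c x₁ x₂ t) = (2 * π) ^ 2 * cbar


open intervalIntegral Function

namespace ACH

noncomputable section

def S : Set (ℝ×ℝ×ℝ) := {p | 0 ≤ p.2.2}

lemma isOpen_posT : IsOpen {p : ℝ×ℝ×ℝ | 0 < p.2.2} :=
  isOpen_lt continuous_const (continuous_snd.snd)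

lemma S_mem_nhds {p : ℝ×ℝ×ℝ} (hp : 0 < p.2.2) : S ∈ nhds p :=
  Filter.mem_of_superset (isOpen_posT.mem_nhds hp)
    (fun q hq => show (0:ℝ) ≤ q.2.2 from le_of_lt hq)

lemma convex_S : Convex ℝ S := by
  intro p hp q hq a b ha hb hab
  have : 0 ≤ a * p.2.2 + b * q.2.2 :=
    add_nonneg (mul_nonneg ha hp) (mul_nonneg hb hq)
  simpa [S, Prod.smul_def, smul_eq_mul] using this

lemma uniqueDiffOn_S : UniqueDiffOn ℝ S :=
  uniqueDiffOn_convex convex_S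
    ⟨((0:ℝ),(0:ℝ),(1:ℝ)), mem_interior_iff_mem_nhds.2 (S_mem_nhds (by norm_num))⟩

def D1 (f : ℝ×ℝ×ℝ → ℝ) : ℝ×ℝ×ℝ → ℝ := fun p => fderivWithin ℝ f S p (1,0,0)
def D2 (f : ℝ×ℝ×ℝ → ℝ) : ℝ×ℝ×ℝ → ℝ := fun p => fderivWithin ℝ f S p (0,1,0)
def Dt (f : ℝ×ℝ×ℝ → ℝ) : ℝ×ℝ×ℝ → ℝ := fun p => fderivWithin ℝ f S p (0,0,1)

def Nice (f : ℝ×ℝ×ℝ → ℝ) : Prop := ContDiffOn ℝ (⊤ : ℕ∞) f S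

lemma Nice.pd {f} (hf : Nice f) (v : ℝ×ℝ×ℝ) :
    Nice (fun p => fderivWithin ℝ f S p v) :=
  (hf.fderivWithin uniqueDiffOn_S (by simp)).clm_apply contDiffOn_const

lemma Nice.d1 {f} (hf : Nice f) : Nice (D1 f) := hf.pd _
lemma Nice.d2 {f} (hf : Nice f) : Nice (D2 f) := hf.pd _
lemma Nice.dt {f} (hf : Nice f) : Nice (Dt f) := hf.pd _

lemma Nice.hasFDerivAt {f} (hf : Nice f) {p : ℝ×ℝ×ℝ} (hp : 0 < p.2.2) :
    HasFDerivAt f (fderivWithin ℝ f S p) p := by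
  rw [fderivWithin_of_mem_nhds (S_mem_nhds hp)]
  exact ((hf.contDiffAt (S_mem_nhds hp)).differentiableAt (by simp)).hasFDerivAt

lemma hasDerivAt_D1 {f} (hf : Nice f) {x₁ x₂ t : ℝ} (ht : 0 < t) :
    HasDerivAt (fun y => f (y, x₂, t)) (D1 f (x₁, x₂, t)) x₁ := by
  have h := hf.hasFDerivAt (p := (x₁, x₂, t)) ht
  have hline : HasDerivAt (fun y : ℝ => ((y, x₂, t) : ℝ×ℝ×ℝ)) ((1,0,0) : ℝ×ℝ×ℝ) x₁ :=
    (hasDerivAt_id x₁).prodMk ((hasDerivAt_const x₁ x₂).prodMk (hasDerivAt_const x₁ t))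
  exact h.comp_hasDerivAt x₁ hline

lemma hasDerivAt_D2 {f} (hf : Nice f) {x₁ x₂ t : ℝ} (ht : 0 < t) :
    HasDerivAt (fun y => f (x₁, y, t)) (D2 f (x₁, x₂, t)) x₂ := by
  have h := hf.hasFDerivAt (p := (x₁, x₂, t)) ht
  have hline : HasDerivAt (fun y : ℝ => ((x₁, y, t) : ℝ×ℝ×ℝ)) ((0,1,0) : ℝ×ℝ×ℝ) x₂ :=
    (hasDerivAt_const x₂ x₁).prodMk ((hasDerivAt_id x₂).prodMk (hasDerivAt_const x₂ t))
  exact h.comp_hasDerivAt x₂ hline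

lemma hasDerivAt_Dt {f} (hf : Nice f) {x₁ x₂ t : ℝ} (ht : 0 < t) :
    HasDerivAt (fun s => f (x₁, x₂, s)) (Dt f (x₁, x₂, t)) t := by
  have h := hf.hasFDerivAt (p := (x₁, x₂, t)) ht
  have hline : HasDerivAt (fun s : ℝ => ((x₁, x₂, s) : ℝ×ℝ×ℝ)) ((0,0,1) : ℝ×ℝ×ℝ) t :=
    (hasDerivAt_const t x₁).prodMk ((hasDerivAt_const t x₂).prodMk (hasDerivAt_id t))
  exact h.comp_hasDerivAt t hline

lemma D1_eq {f d} (hf : Nice f) {x₁ x₂ t : ℝ} (ht : 0 < t)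
    (h : HasDerivAt (fun y => f (y, x₂, t)) d x₁) : D1 f (x₁, x₂, t) = d :=
  (hasDerivAt_D1 hf ht).unique h

lemma D2_eq {f d} (hf : Nice f) {x₁ x₂ t : ℝ} (ht : 0 < t)
    (h : HasDerivAt (fun y => f (x₁, y, t)) d x₂) : D2 f (x₁, x₂, t) = d :=
  (hasDerivAt_D2 hf ht).unique h

lemma Dt_eq {f d} (hf : Nice f) {x₁ x₂ t : ℝ} (ht : 0 < t)
    (h : HasDerivAt (fun s => f (x₁, x₂, s)) d t) : Dt f (x₁, x₂, t) = d :=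
  (hasDerivAt_Dt hf ht).unique h

lemma Nice.slice {f} (hf : Nice f) {t : ℝ} (ht : 0 ≤ t) :
    Continuous (fun q : ℝ×ℝ => f (q.1, q.2, t)) :=
  hf.continuousOn.comp_continuous (by fun_prop) (fun _ => ht)

-- algebraic closure
lemma Nice.add {f g} (hf : Nice f) (hg : Nice g) : Nice (fun p => f p + g p) := ContDiffOn.add hf hg
lemma Nice.mul {f g} (hf : Nice f) (hg : Nice g) : Nice (fun p => f p * g p) := ContDiffOn.mul hf hg
lemma Nice.sub_const {f} (hf : Nice f) (a : ℝ) : Nice (fun p => f p - a) := hf.sub contDiffOn_const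
lemma Nice.pow {f} (hf : Nice f) (n : ℕ) : Nice (fun p => f p ^ n) := ContDiffOn.pow hf n
lemma nice_const (a : ℝ) : Nice (fun _ => a) := contDiffOn_const

lemma h2pi : (0:ℝ) ≤ 2 * π := by positivity

def J (h : ℝ×ℝ×ℝ → ℝ) (t : ℝ) : ℝ :=
  ∫ x₁ in (0:ℝ)..(2*π), ∫ x₂ in (0:ℝ)..(2*π), h (x₁, x₂, t)

section Jbasic

variable {h k : ℝ×ℝ×ℝ → ℝ} {t : ℝ}

/-- continuity of the 2-variable slice -/
def SC (h : ℝ×ℝ×ℝ → ℝ) (t : ℝ) : Prop := Continuous (fun q : ℝ×ℝ => h (q.1, q.2, t))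

lemma SC.mul (hh : SC h t) (hk : SC k t) : SC (fun p => h p * k p) t := Continuous.mul hh hk
lemma SC.add (hh : SC h t) (hk : SC k t) : SC (fun p => h p + k p) t := Continuous.add hh hk
lemma SC.fix1 (hh : SC h t) (x₁ : ℝ) : Continuous (fun x₂ => h (x₁, x₂, t)) :=
  hh.comp (continuous_const.prodMk continuous_id)
lemma SC.fix2 (hh : SC h t) (x₂ : ℝ) : Continuous (fun x₁ => h (x₁, x₂, t)) :=
  hh.comp (continuous_id.prodMk continuous_const)
lemma SC.inner (hh : SC h t) :
    Continuous (fun x₁ => ∫ x₂ in (0:ℝ)..(2*π), h (x₁, x₂, t)) := by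
  exact intervalIntegral.continuous_parametric_intervalIntegral_of_continuous'
    (f := fun x₁ x₂ => h (x₁, x₂, t)) hh 0 (2*π)
lemma SC.inner2 (hh : SC h t) :
    Continuous (fun x₂ => ∫ x₁ in (0:ℝ)..(2*π), h (x₁, x₂, t)) := by
  exact intervalIntegral.continuous_parametric_intervalIntegral_of_continuous'
    (f := fun x₂ x₁ => h (x₁, x₂, t)) (hh.comp (continuous_swap)) 0 (2*π)

lemma J_congr (he : ∀ x₁ x₂, h (x₁, x₂, t) = k (x₁, x₂, t)) : J h t = J k t :=
  integral_congr (fun x₁ _ => integral_congr (fun x₂ _ => he x₁ x₂))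

lemma J_add (hh : SC h t) (hk : SC k t) :
    J (fun p => h p + k p) t = J h t + J k t := by
  unfold J
  rw [integral_congr (g := fun x₁ => (∫ x₂ in (0:ℝ)..(2*π), h (x₁,x₂,t)) + ∫ x₂ in (0:ℝ)..(2*π), k (x₁,x₂,t))
    (fun x₁ _ => integral_add ((hh.fix1 x₁).intervalIntegrable _ _) ((hk.fix1 x₁).intervalIntegrable _ _))]
  exact integral_add (hh.inner.intervalIntegrable _ _) (hk.inner.intervalIntegrable _ _)

lemma J_const_mul (a : ℝ) : J (fun p => a * h p) t = a * J h t := by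
  unfold J
  rw [integral_congr (g := fun x₁ => a * ∫ x₂ in (0:ℝ)..(2*π), h (x₁,x₂,t))
    (fun x₁ _ => integral_const_mul a _)]
  exact integral_const_mul a _

lemma J_neg : J (fun p => - h p) t = - J h t := by
  have := J_const_mul (h := h) (t := t) (-1); simpa using this

lemma J_sub (hh : SC h t) (hk : SC k t) :
    J (fun p => h p - k p) t = J h t - J k t := by
  have : J (fun p => h p + (-1) * k p) t = J h t + J (fun p => (-1) * k p) t :=
    J_add hh (by exact (continuous_const.mul hk : _))
  rw [J_const_mul] at this
  simpa [sub_eq_add_neg] using this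

lemma J_nonneg (hp : ∀ x₁ x₂, 0 ≤ h (x₁, x₂, t)) : 0 ≤ J h t :=
  integral_nonneg h2pi (fun x₁ _ => integral_nonneg h2pi (fun x₂ _ => hp x₁ x₂))

lemma J_mono (hh : SC h t) (hk : SC k t) (hle : ∀ x₁ x₂, h (x₁,x₂,t) ≤ k (x₁,x₂,t)) :
    J h t ≤ J k t := by
  have h0 : 0 ≤ J (fun p => k p - h p) t := J_nonneg (fun x₁ x₂ => sub_nonneg.2 (hle x₁ x₂))
  rw [J_sub hk hh] at h0; linarith

lemma J_swap (hh : SC h t) :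
    J h t = ∫ x₂ in (0:ℝ)..(2*π), ∫ x₁ in (0:ℝ)..(2*π), h (x₁, x₂, t) := by
  unfold J
  simp only [intervalIntegral.integral_of_le h2pi]
  have hint : Integrable (Function.uncurry fun x₁ x₂ => h (x₁, x₂, t))
      ((volume.restrict (Ioc (0:ℝ) (2*π))).prod (volume.restrict (Ioc (0:ℝ) (2*π)))) := by
    rw [Measure.prod_restrict]
    have hc : Continuous (Function.uncurry fun x₁ x₂ => h (x₁, x₂, t)) := hh
    have h1 : IntegrableOn (Function.uncurry fun x₁ x₂ => h (x₁, x₂, t))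
        (Icc (0:ℝ) (2*π) ×ˢ Icc (0:ℝ) (2*π)) (volume.prod volume) := by
      rw [← Measure.volume_eq_prod]
      exact hc.continuousOn.integrableOn_compact (isCompact_Icc.prod isCompact_Icc)
    exact h1.mono_set (prod_mono Ioc_subset_Icc_self Ioc_subset_Icc_self)
  exact MeasureTheory.integral_integral_swap hint

end Jbasic

/-- 1-D Cauchy-Schwarz. -/
lemma cs1 {f g : ℝ → ℝ} {a b : ℝ} (hab : a ≤ b) (hf : Continuous f) (hg : Continuous g) :
    (∫ x in a..b, f x * g x) ^ 2 ≤ (∫ x in a..b, f x ^ 2) * (∫ x in a..b, g x ^ 2) := by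
  have key : ∀ lam : ℝ, 0 ≤ (∫ x in a..b, g x ^ 2) * (lam * lam)
      + (2 * ∫ x in a..b, f x * g x) * lam + (∫ x in a..b, f x ^ 2) := by
    intro lam
    have h0 : 0 ≤ ∫ x in a..b, (f x + lam * g x) ^ 2 :=
      integral_nonneg hab (fun x _ => sq_nonneg _)
    have e1 : ∀ x ∈ uIcc a b, (f x + lam * g x) ^ 2
        = (g x ^ 2) * (lam * lam) + (f x * g x) * (2 * lam) + f x ^ 2 := fun x _ => by ring
    rw [integral_congr e1, intervalIntegral.integral_add
        (f := fun x => g x ^ 2 * (lam * lam) + f x * g x * (2 * lam)) (g := fun x => f x ^ 2)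
        ((((hg.pow 2).mul continuous_const).add ((hf.mul hg).mul continuous_const)).intervalIntegrable _ _)
        ((hf.pow 2).intervalIntegrable _ _),
      intervalIntegral.integral_add
        (f := fun x => g x ^ 2 * (lam * lam)) (g := fun x => f x * g x * (2 * lam))
        (((hg.pow 2).mul continuous_const).intervalIntegrable _ _)
        (((hf.mul hg).mul continuous_const).intervalIntegrable _ _),
      intervalIntegral.integral_mul_const, intervalIntegral.integral_mul_const] at h0
    linarith
  have hd := discrim_le_zero key
  rw [discrim] at hd
  nlinarith [hd]

/-- Cauchy–Schwarz for the double integral. -/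
lemma J_cs {h k : ℝ×ℝ×ℝ → ℝ} {t : ℝ} (hh : SC h t) (hk : SC k t) :
    |J (fun p => h p * k p) t|
      ≤ Real.sqrt (J (fun p => h p ^ 2) t) * Real.sqrt (J (fun p => k p ^ 2) t) := by
  set A : ℝ → ℝ := fun x₁ => ∫ x₂ in (0:ℝ)..(2*π), h (x₁,x₂,t) ^ 2 with hAdef
  set B : ℝ → ℝ := fun x₁ => ∫ x₂ in (0:ℝ)..(2*π), k (x₁,x₂,t) ^ 2 with hBdef
  set C : ℝ → ℝ := fun x₁ => ∫ x₂ in (0:ℝ)..(2*π), h (x₁,x₂,t) * k (x₁,x₂,t) with hCdef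
  have hA0 : ∀ x₁, 0 ≤ A x₁ := fun x₁ => integral_nonneg h2pi (fun x _ => sq_nonneg _)
  have hB0 : ∀ x₁, 0 ≤ B x₁ := fun x₁ => integral_nonneg h2pi (fun x _ => sq_nonneg _)
  have hcA : Continuous A := SC.inner (h := fun p => h p ^ 2) (hh.pow 2)
  have hcB : Continuous B := SC.inner (h := fun p => k p ^ 2) (hk.pow 2)
  have hcC : Continuous C := SC.inner (h := fun p => h p * k p) (hh.mul hk)
  have hCb : ∀ x₁, |C x₁| ≤ Real.sqrt (A x₁) * Real.sqrt (B x₁) := by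
    intro x₁
    have h1 : (C x₁) ^ 2 ≤ A x₁ * B x₁ := cs1 h2pi (hh.fix1 x₁) (hk.fix1 x₁)
    have : |C x₁| = Real.sqrt ((C x₁) ^ 2) := (Real.sqrt_sq_eq_abs _).symm
    rw [this, ← Real.sqrt_mul (hA0 x₁)]
    exact Real.sqrt_le_sqrt h1
  have step1 : |J (fun p => h p * k p) t| ≤ ∫ x₁ in (0:ℝ)..(2*π), |C x₁| :=
    abs_integral_le_integral_abs h2pi
  have step2 : (∫ x₁ in (0:ℝ)..(2*π), |C x₁|)
      ≤ ∫ x₁ in (0:ℝ)..(2*π), Real.sqrt (A x₁) * Real.sqrt (B x₁) := by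
    apply intervalIntegral.integral_mono_on h2pi
      (hcC.abs.intervalIntegrable _ _)
      (((continuous_sqrt.comp hcA).mul (continuous_sqrt.comp hcB)).intervalIntegrable _ _)
    exact fun x _ => hCb x
  have step3 : (∫ x₁ in (0:ℝ)..(2*π), Real.sqrt (A x₁) * Real.sqrt (B x₁))
      ≤ Real.sqrt (J (fun p => h p ^ 2) t) * Real.sqrt (J (fun p => k p ^ 2) t) := by
    have hcs := cs1 h2pi (continuous_sqrt.comp hcA) (continuous_sqrt.comp hcB)
    simp only [Function.comp] at hcs
    have eA : (∫ x in (0:ℝ)..(2*π), (Real.sqrt (A x)) ^ 2) = J (fun p => h p ^ 2) t :=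
      integral_congr (fun x _ => Real.sq_sqrt (hA0 x))
    have eB : (∫ x in (0:ℝ)..(2*π), (Real.sqrt (B x)) ^ 2) = J (fun p => k p ^ 2) t :=
      integral_congr (fun x _ => Real.sq_sqrt (hB0 x))
    rw [eA, eB] at hcs
    have hnn : 0 ≤ ∫ x₁ in (0:ℝ)..(2*π), Real.sqrt (A x₁) * Real.sqrt (B x₁) :=
      integral_nonneg h2pi (fun x _ => mul_nonneg (Real.sqrt_nonneg _) (Real.sqrt_nonneg _))
    have := Real.sqrt_le_sqrt hcs
    rw [Real.sqrt_sq hnn, Real.sqrt_mul (J_nonneg (fun a b => sq_nonneg _))] at this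
    exact this
  linarith

/-- Integration by parts in the first variable. -/
lemma IBPx {h k h1 k1 : ℝ×ℝ×ℝ → ℝ} {t : ℝ}
    (hdh : ∀ x₁ x₂ : ℝ, HasDerivAt (fun y => h (y, x₂, t)) (h1 (x₁, x₂, t)) x₁)
    (hdk : ∀ x₁ x₂ : ℝ, HasDerivAt (fun y => k (y, x₂, t)) (k1 (x₁, x₂, t)) x₁)
    (ch : SC h t) (ck : SC k t) (ch1 : SC h1 t) (ck1 : SC k1 t)
    (hper : ∀ x₂ : ℝ, h (2*π, x₂, t) * k (2*π, x₂, t) = h (0, x₂, t) * k (0, x₂, t)) :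
    J (fun p => h p * k1 p) t = - J (fun p => h1 p * k p) t := by
  rw [J_swap (ch.mul ck1), J_swap (ch1.mul ck), ← intervalIntegral.integral_neg]
  apply integral_congr
  intro x₂ _
  show (∫ x₁ in (0:ℝ)..(2*π), h (x₁, x₂, t) * k1 (x₁, x₂, t))
      = -∫ x₁ in (0:ℝ)..(2*π), h1 (x₁, x₂, t) * k (x₁, x₂, t)
  have hibp := intervalIntegral.integral_mul_deriv_eq_deriv_mul
    (a := (0:ℝ)) (b := 2*π)
    (u := fun y => h (y, x₂, t)) (v := fun y => k (y, x₂, t))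
    (u' := fun x₁ => h1 (x₁, x₂, t)) (v' := fun x₁ => k1 (x₁, x₂, t))
    (fun x _ => hdh x x₂) (fun x _ => hdk x x₂)
    ((ch1.fix2 x₂).intervalIntegrable _ _) ((ck1.fix2 x₂).intervalIntegrable _ _)
  rw [hibp, hper x₂]
  ring

/-- Integration by parts in the second variable. -/
lemma IBPy {h k h2 k2 : ℝ×ℝ×ℝ → ℝ} {t : ℝ}
    (hdh : ∀ x₁ x₂ : ℝ, HasDerivAt (fun y => h (x₁, y, t)) (h2 (x₁, x₂, t)) x₂)
    (hdk : ∀ x₁ x₂ : ℝ, HasDerivAt (fun y => k (x₁, y, t)) (k2 (x₁, x₂, t)) x₂)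
    (ch2 : SC h2 t) (ck2 : SC k2 t)
    (hper : ∀ x₁ : ℝ, h (x₁, 2*π, t) * k (x₁, 2*π, t) = h (x₁, 0, t) * k (x₁, 0, t)) :
    J (fun p => h p * k2 p) t = - J (fun p => h2 p * k p) t := by
  unfold J
  rw [← intervalIntegral.integral_neg]
  apply integral_congr
  intro x₁ _
  show (∫ x₂ in (0:ℝ)..(2*π), h (x₁, x₂, t) * k2 (x₁, x₂, t))
      = -∫ x₂ in (0:ℝ)..(2*π), h2 (x₁, x₂, t) * k (x₁, x₂, t)
  have hibp := intervalIntegral.integral_mul_deriv_eq_deriv_mul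
    (a := (0:ℝ)) (b := 2*π)
    (u := fun y => h (x₁, y, t)) (v := fun y => k (x₁, y, t))
    (u' := fun x₂ => h2 (x₁, x₂, t)) (v' := fun x₂ => k2 (x₁, x₂, t))
    (fun x _ => hdh x₁ x) (fun x _ => hdk x₁ x)
    ((ch2.fix1 x₁).intervalIntegrable _ _) ((ck2.fix1 x₁).intervalIntegrable _ _)
  rw [hibp, hper x₁]
  ring

lemma J_continuousOn {h : ℝ×ℝ×ℝ → ℝ} (hc : ContinuousOn h S) :
    ContinuousOn (J h) (Ici 0) := by
  rw [continuousOn_iff_continuous_restrict]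
  have hjoint : Continuous (fun z : (↥(Ici (0:ℝ)) × ℝ) × ℝ => h (z.1.2, z.2, ↑z.1.1)) :=
    hc.comp_continuous (by fun_prop) (fun z => z.1.1.2)
  have hinner : Continuous (fun w : ↥(Ici (0:ℝ)) × ℝ =>
      ∫ x₂ in (0:ℝ)..(2*π), h (w.2, x₂, ↑w.1)) :=
    intervalIntegral.continuous_parametric_intervalIntegral_of_continuous'
      (f := fun (w : ↥(Ici (0:ℝ)) × ℝ) x₂ => h (w.2, x₂, ↑w.1)) hjoint 0 (2*π)
  exact intervalIntegral.continuous_parametric_intervalIntegral_of_continuous'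
    (f := fun (t : ↥(Ici (0:ℝ))) x₁ => ∫ x₂ in (0:ℝ)..(2*π), h (x₁, x₂, ↑t)) hinner 0 (2*π)
lemma mem_Icc_of_ball {t σ : ℝ} (ht : 0 < t) (hσ : σ ∈ Metric.ball t (t/2)) :
    σ ∈ Icc (t/2) (2*t) := by
  rw [Metric.mem_ball, Real.dist_eq] at hσ
  have := abs_lt.1 hσ
  constructor <;> [linarith [this.1]; linarith [this.2]]

set_option maxHeartbeats 1000000 in
lemma J_hasDerivAt {h : ℝ×ℝ×ℝ → ℝ} (hh : Nice h) {t : ℝ} (ht : 0 < t) :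
    HasDerivAt (J h) (J (Dt h) t) t := by
  show HasDerivAt (fun σ => ∫ x₁ in (0:ℝ)..(2*π), ∫ x₂ in (0:ℝ)..(2*π), h (x₁, x₂, σ))
    (∫ x₁ in (0:ℝ)..(2*π), ∫ x₂ in (0:ℝ)..(2*π), Dt h (x₁, x₂, t)) t
  have hKsub : (Icc (0:ℝ) (2*π) ×ˢ Icc (0:ℝ) (2*π) ×ˢ Icc (t/2) (2*t)) ⊆ S := by
    intro p hp
    have := hp.2.2.1
    show (0:ℝ) ≤ p.2.2
    linarith
  obtain ⟨M, hM⟩ : ∃ M, ∀ p ∈ (Icc (0:ℝ) (2*π) ×ˢ Icc (0:ℝ) (2*π) ×ˢ Icc (t/2) (2*t)),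
      ‖Dt h p‖ ≤ M :=
    (isCompact_Icc.prod (isCompact_Icc.prod isCompact_Icc)).exists_bound_of_continuousOn
      ((hh.dt).continuousOn.mono hKsub)
  have hIsub : Set.uIoc (0:ℝ) (2*π) ⊆ Icc (0:ℝ) (2*π) := by
    rw [uIoc_of_le h2pi]; exact Ioc_subset_Icc_self
  -- inner derivative claim
  have claim_inner : ∀ x₁ ∈ Icc (0:ℝ) (2*π), ∀ s ∈ Metric.ball t (t/2),
      HasDerivAt (fun σ => ∫ x₂ in (0:ℝ)..(2*π), h (x₁, x₂, σ))
        (∫ x₂ in (0:ℝ)..(2*π), Dt h (x₁, x₂, s)) s := by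
    intro x₁ hx₁ s hs
    have habs := abs_lt.1 (by rw [Metric.mem_ball, Real.dist_eq] at hs; exact hs)
    have hs1 : t/2 < s := by linarith [habs.1]
    have hs2 : s < 3*t/2 := by linarith [habs.2]
    have hs0 : 0 < s := by linarith
    have hε' : 0 < min (s - t/2) (2*t - s) := lt_min (by linarith) (by linarith)
    have hballsub : ∀ σ ∈ Metric.ball s (min (s - t/2) (2*t - s)), σ ∈ Icc (t/2) (2*t) := by
      intro σ hσ
      rw [Metric.mem_ball, Real.dist_eq] at hσ
      have h1 := abs_lt.1 hσ
      have h2 := min_le_left (s - t/2) (2*t - s)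
      have h3 := min_le_right (s - t/2) (2*t - s)
      exact ⟨by linarith [h1.1], by linarith [h1.2]⟩
    refine (intervalIntegral.hasDerivAt_integral_of_dominated_loc_of_deriv_le
      (F := fun σ x₂ => h (x₁, x₂, σ)) (F' := fun σ x₂ => Dt h (x₁, x₂, σ))
      (a := 0) (b := 2*π) (x₀ := s) (bound := fun _ => M) (Metric.ball_mem_nhds s hε') ?_ ?_ ?_ ?_ ?_ ?_).2
    · filter_upwards [Ioi_mem_nhds hs0] with σ hσ
      exact (((hh.slice (le_of_lt hσ)).comp
        (continuous_const.prodMk continuous_id)).aestronglyMeasurable)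
    · exact (((hh.slice (le_of_lt hs0)).comp
        (continuous_const.prodMk continuous_id)).intervalIntegrable _ _)
    · exact ((((hh.dt).slice (le_of_lt hs0)).comp
        (continuous_const.prodMk continuous_id)).aestronglyMeasurable)
    · apply Filter.Eventually.of_forall
      intro x₂ hx₂ σ hσ
      exact hM _ ⟨hx₁, hIsub hx₂, hballsub σ hσ⟩
    · exact intervalIntegrable_const
    · apply Filter.Eventually.of_forall
      intro x₂ _ σ hσ
      have hσ0 : 0 < σ := lt_of_lt_of_le (by linarith) (hballsub σ hσ).1
      exact hasDerivAt_Dt hh hσ0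
  -- outer application
  have hhalf : 0 < t/2 := by linarith
  have A1 : ∀ᶠ σ in nhds t, AEStronglyMeasurable
      (fun x₁ => ∫ x₂ in (0:ℝ)..(2*π), h (x₁, x₂, σ))
      (volume.restrict (Set.uIoc (0:ℝ) (2*π))) := by
    filter_upwards [Ioi_mem_nhds ht] with σ hσ
    exact (SC.inner (hh.slice (le_of_lt hσ))).aestronglyMeasurable
  have A2 : IntervalIntegrable (fun x₁ => ∫ x₂ in (0:ℝ)..(2*π), h (x₁, x₂, t))
      volume 0 (2*π) := (SC.inner (hh.slice (le_of_lt ht))).intervalIntegrable _ _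
  have A3 : AEStronglyMeasurable (fun x₁ => ∫ x₂ in (0:ℝ)..(2*π), Dt h (x₁, x₂, t))
      (volume.restrict (Set.uIoc (0:ℝ) (2*π))) :=
    (SC.inner ((hh.dt).slice (le_of_lt ht))).aestronglyMeasurable
  have A4 : ∀ᵐ x₁ ∂(volume : Measure ℝ), x₁ ∈ Set.uIoc (0:ℝ) (2*π) →
      ∀ σ ∈ Metric.ball t (t/2),
        ‖∫ x₂ in (0:ℝ)..(2*π), Dt h (x₁, x₂, σ)‖ ≤ M * (2*π) := by
    apply Filter.Eventually.of_forall
    intro x₁ hx₁ σ hσ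
    have hb : ∀ x₂ ∈ Set.uIoc (0:ℝ) (2*π), ‖Dt h (x₁, x₂, σ)‖ ≤ M := by
      intro x₂ hx₂
      exact hM _ ⟨hIsub hx₁, hIsub hx₂, mem_Icc_of_ball ht hσ⟩
    calc ‖∫ x₂ in (0:ℝ)..(2*π), Dt h (x₁, x₂, σ)‖ ≤ M * |2*π - 0| :=
        intervalIntegral.norm_integral_le_of_norm_le_const hb
      _ = M * (2*π) := by rw [sub_zero, abs_of_nonneg h2pi]
  have A5 : IntervalIntegrable (fun _ : ℝ => M * (2*π)) volume 0 (2*π) :=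
    intervalIntegrable_const
  have A6 : ∀ᵐ x₁ ∂(volume : Measure ℝ), x₁ ∈ Set.uIoc (0:ℝ) (2*π) →
      ∀ σ ∈ Metric.ball t (t/2),
        HasDerivAt (fun σ' => ∫ x₂ in (0:ℝ)..(2*π), h (x₁, x₂, σ'))
          (∫ x₂ in (0:ℝ)..(2*π), Dt h (x₁, x₂, σ)) σ := by
    apply Filter.Eventually.of_forall
    intro x₁ hx₁ σ hσ
    exact claim_inner x₁ (hIsub hx₁) σ hσ
  exact (intervalIntegral.hasDerivAt_integral_of_dominated_loc_of_deriv_le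
    (Metric.ball_mem_nhds t hhalf) A1 A2 A3 A4 A5 A6).2

def Lp (f : ℝ×ℝ×ℝ → ℝ) : ℝ×ℝ×ℝ → ℝ := fun p => D1 (D1 f) p + D2 (D2 f) p

lemma Nice.lp {f} (hf : Nice f) : Nice (Lp f) := (hf.d1.d1).add (hf.d2.d2)

lemma lap_bridge {f : ℝ×ℝ×ℝ → ℝ} (hf : Nice f) {t : ℝ} (ht : 0 < t) (x₁ x₂ : ℝ) :
    lap2 (fun a b => f (a, b, t)) x₁ x₂ = Lp f (x₁, x₂, t) := by
  show deriv (deriv (fun y => f (y, x₂, t))) x₁ + deriv (deriv (fun y => f (x₁, y, t))) x₂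
    = D1 (D1 f) (x₁, x₂, t) + D2 (D2 f) (x₁, x₂, t)
  congr 1
  · have e : deriv (fun y => f (y, x₂, t)) = fun y => D1 f (y, x₂, t) :=
      funext fun y => (hasDerivAt_D1 hf ht).deriv
    rw [e]
    exact (hasDerivAt_D1 (hf.d1) ht).deriv
  · have e : deriv (fun y => f (x₁, y, t)) = fun y => D2 f (x₁, y, t) :=
      funext fun y => (hasDerivAt_D2 hf ht).deriv
    rw [e]
    exact (hasDerivAt_D2 (hf.d2) ht).deriv

/-- periodicity (in both space variables) of a function at time `t`. -/
structure PerT (f : ℝ×ℝ×ℝ → ℝ) (t : ℝ) : Prop where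
  p1 : ∀ x₁ x₂ : ℝ, f (x₁ + 2*π, x₂, t) = f (x₁, x₂, t)
  p2 : ∀ x₁ x₂ : ℝ, f (x₁, x₂ + 2*π, t) = f (x₁, x₂, t)

lemma PerT.mul {f g t} (hf : PerT f t) (hg : PerT g t) : PerT (fun p => f p * g p) t :=
  ⟨fun a b => by simp [hf.p1 a b, hg.p1 a b], fun a b => by simp [hf.p2 a b, hg.p2 a b]⟩
lemma PerT.add {f g t} (hf : PerT f t) (hg : PerT g t) : PerT (fun p => f p + g p) t :=
  ⟨fun a b => by simp [hf.p1 a b, hg.p1 a b], fun a b => by simp [hf.p2 a b, hg.p2 a b]⟩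
lemma PerT.sub_const {f t} (hf : PerT f t) (a : ℝ) : PerT (fun p => f p - a) t :=
  ⟨fun x y => by simp [hf.p1 x y], fun x y => by simp [hf.p2 x y]⟩
lemma PerT.pow {f t} (hf : PerT f t) (n : ℕ) : PerT (fun p => f p ^ n) t :=
  ⟨fun x y => by simp [hf.p1 x y], fun x y => by simp [hf.p2 x y]⟩
lemma PerT.sub {f g t} (hf : PerT f t) (hg : PerT g t) : PerT (fun p => f p - g p) t :=
  ⟨fun a b => by simp [hf.p1 a b, hg.p1 a b], fun a b => by simp [hf.p2 a b, hg.p2 a b]⟩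

lemma PerT.d1 {f t} (hf : Nice f) (ht : 0 < t) (hp : PerT f t) : PerT (D1 f) t := by
  constructor
  · intro x₁ x₂
    have e3 : (fun y => f (y + 2*π, x₂, t)) = fun y => f (y, x₂, t) :=
      funext fun y => hp.p1 y x₂
    calc D1 f (x₁ + 2*π, x₂, t) = deriv (fun y => f (y, x₂, t)) (x₁ + 2*π) :=
          ((hasDerivAt_D1 hf ht).deriv).symm
      _ = deriv (fun y => f (y + 2*π, x₂, t)) x₁ := (deriv_comp_add_const _ _ _).symm
      _ = deriv (fun y => f (y, x₂, t)) x₁ := by rw [e3]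
      _ = D1 f (x₁, x₂, t) := (hasDerivAt_D1 hf ht).deriv
  · intro x₁ x₂
    have e3 : (fun y => f (y, x₂ + 2*π, t)) = fun y => f (y, x₂, t) :=
      funext fun y => hp.p2 y x₂
    calc D1 f (x₁, x₂ + 2*π, t) = deriv (fun y => f (y, x₂ + 2*π, t)) x₁ :=
          ((hasDerivAt_D1 hf ht).deriv).symm
      _ = deriv (fun y => f (y, x₂, t)) x₁ := by rw [e3]
      _ = D1 f (x₁, x₂, t) := (hasDerivAt_D1 hf ht).deriv

lemma PerT.d2 {f t} (hf : Nice f) (ht : 0 < t) (hp : PerT f t) : PerT (D2 f) t := by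
  constructor
  · intro x₁ x₂
    have e3 : (fun y => f (x₁ + 2*π, y, t)) = fun y => f (x₁, y, t) :=
      funext fun y => hp.p1 x₁ y
    calc D2 f (x₁ + 2*π, x₂, t) = deriv (fun y => f (x₁ + 2*π, y, t)) x₂ :=
          ((hasDerivAt_D2 hf ht).deriv).symm
      _ = deriv (fun y => f (x₁, y, t)) x₂ := by rw [e3]
      _ = D2 f (x₁, x₂, t) := (hasDerivAt_D2 hf ht).deriv
  · intro x₁ x₂
    have e3 : (fun y => f (x₁, y + 2*π, t)) = fun y => f (x₁, y, t) :=
      funext fun y => hp.p2 x₁ y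
    calc D2 f (x₁, x₂ + 2*π, t) = deriv (fun y => f (x₁, y, t)) (x₂ + 2*π) :=
          ((hasDerivAt_D2 hf ht).deriv).symm
      _ = deriv (fun y => f (x₁, y + 2*π, t)) x₂ := (deriv_comp_add_const _ _ _).symm
      _ = deriv (fun y => f (x₁, y, t)) x₂ := by rw [e3]
      _ = D2 f (x₁, x₂, t) := (hasDerivAt_D2 hf ht).deriv

lemma PerT.lp {f t} (hf : Nice f) (ht : 0 < t) (hp : PerT f t) : PerT (Lp f) t :=
  ((hp.d1 hf ht).d1 hf.d1 ht).add ((hp.d2 hf ht).d2 hf.d2 ht)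

/-- boundary product condition for IBPx from periodicity -/
lemma PerT.bdry1 {h k : ℝ×ℝ×ℝ → ℝ} {t : ℝ} (hh : PerT h t) (hk : PerT k t) :
    ∀ x₂ : ℝ, h (2*π, x₂, t) * k (2*π, x₂, t) = h (0, x₂, t) * k (0, x₂, t) := by
  intro x₂
  have h1 := hh.p1 0 x₂
  have h2 := hk.p1 0 x₂
  rw [zero_add] at h1 h2
  rw [h1, h2]

lemma PerT.bdry2 {h k : ℝ×ℝ×ℝ → ℝ} {t : ℝ} (hh : PerT h t) (hk : PerT k t) :
    ∀ x₁ : ℝ, h (x₁, 2*π, t) * k (x₁, 2*π, t) = h (x₁, 0, t) * k (x₁, 0, t) := by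
  intro x₁
  have h1 := hh.p2 x₁ 0
  have h2 := hk.p2 x₁ 0
  rw [zero_add] at h1 h2
  rw [h1, h2]

lemma J_zero {t : ℝ} : J (fun _ => (0:ℝ)) t = 0 := by simp [J]

def Cf (c : ℝ → ℝ → ℝ → ℝ) : ℝ×ℝ×ℝ → ℝ := fun p => c p.1 p.2.1 p.2.2
def U1f (u : ℝ → ℝ → ℝ → ℝ × ℝ) : ℝ×ℝ×ℝ → ℝ := fun p => (u p.1 p.2.1 p.2.2).1
def U2f (u : ℝ → ℝ → ℝ → ℝ × ℝ) : ℝ×ℝ×ℝ → ℝ := fun p => (u p.1 p.2.1 p.2.2).2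
def Vf (c : ℝ → ℝ → ℝ → ℝ) (cbar : ℝ) : ℝ×ℝ×ℝ → ℝ := fun p => Cf c p - cbar
def Qf (c : ℝ → ℝ → ℝ → ℝ) (cbar : ℝ) : ℝ×ℝ×ℝ → ℝ := fun p => Vf c cbar p ^ 2
def Wf (c : ℝ → ℝ → ℝ → ℝ) : ℝ×ℝ×ℝ → ℝ := fun p => Cf c p ^ 3 - Cf c p

section Solution

variable {γ : ℝ} {u : ℝ → ℝ → ℝ → ℝ × ℝ} {c : ℝ → ℝ → ℝ → ℝ} {cbar : ℝ}
  (hsol : IsAdvCahnHilliardSolution γ u c cbar)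

include hsol

lemma nice_C : Nice (Cf c) := hsol.csmooth
lemma nice_U1 : Nice (U1f u) := contDiff_fst.comp_contDiffOn hsol.usmooth
lemma nice_U2 : Nice (U2f u) := contDiff_snd.comp_contDiffOn hsol.usmooth
lemma nice_V : Nice (Vf c cbar) := (nice_C hsol).sub_const cbar
lemma nice_Q : Nice (Qf c cbar) := (nice_V hsol).pow 2
lemma nice_W : Nice (Wf c) := ((nice_C hsol).pow 3).sub (nice_C hsol)

lemma per_C (t : ℝ) : PerT (Cf c) t :=
  ⟨fun a b => (hsol.cper a b t).1, fun a b => (hsol.cper a b t).2⟩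
lemma per_U1 (t : ℝ) : PerT (U1f u) t :=
  ⟨fun a b => congrArg Prod.fst (hsol.uper a b t).1,
   fun a b => congrArg Prod.fst (hsol.uper a b t).2⟩
lemma per_U2 (t : ℝ) : PerT (U2f u) t :=
  ⟨fun a b => congrArg Prod.snd (hsol.uper a b t).1,
   fun a b => congrArg Prod.snd (hsol.uper a b t).2⟩
lemma per_V (t : ℝ) : PerT (Vf c cbar) t := (per_C hsol t).sub_const cbar
lemma per_Q (t : ℝ) : PerT (Qf c cbar) t := (per_V hsol t).pow 2
lemma per_W (t : ℝ) : PerT (Wf c) t := ((per_C hsol t).pow 3).sub (per_C hsol t)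

variable {t : ℝ} (ht : 0 < t)
include ht

/-- pointwise: `D1 Q = 2 V D1 C`. -/
lemma d1Q (a b : ℝ) :
    D1 (Qf c cbar) (a, b, t) = 2 * Vf c cbar (a, b, t) * D1 (Cf c) (a, b, t) := by
  apply D1_eq (nice_Q hsol) ht
  have h0 : HasDerivAt (fun y => Qf c cbar (y, b, t)) _ a :=
    ((hasDerivAt_D1 (nice_C hsol) ht (x₁ := a) (x₂ := b)).sub_const cbar).pow 2
  convert h0 using 1
  simp only [Vf]
  push_cast
  ring

lemma d2Q (a b : ℝ) :
    D2 (Qf c cbar) (a, b, t) = 2 * Vf c cbar (a, b, t) * D2 (Cf c) (a, b, t) := by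
  apply D2_eq (nice_Q hsol) ht
  have h0 : HasDerivAt (fun y => Qf c cbar (a, y, t)) _ b :=
    ((hasDerivAt_D2 (nice_C hsol) ht (x₁ := a) (x₂ := b)).sub_const cbar).pow 2
  convert h0 using 1
  simp only [Vf]
  push_cast
  ring

lemma dtQ (a b : ℝ) :
    Dt (Qf c cbar) (a, b, t) = 2 * Vf c cbar (a, b, t) * Dt (Cf c) (a, b, t) := by
  apply Dt_eq (nice_Q hsol) ht
  have h0 : HasDerivAt (fun s => Qf c cbar (a, b, s)) _ t :=
    ((hasDerivAt_Dt (nice_C hsol) ht (x₁ := a) (x₂ := b)).sub_const cbar).pow 2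
  convert h0 using 1
  simp only [Vf]
  push_cast
  ring

lemma d1W (a b : ℝ) :
    D1 (Wf c) (a, b, t) = (3 * Cf c (a, b, t) ^ 2 - 1) * D1 (Cf c) (a, b, t) := by
  apply D1_eq (nice_W hsol) ht
  have h0 : HasDerivAt (fun y => Wf c (y, b, t)) _ a :=
    ((hasDerivAt_D1 (nice_C hsol) ht (x₁ := a) (x₂ := b)).pow 3).sub
    (hasDerivAt_D1 (nice_C hsol) ht (x₁ := a) (x₂ := b))
  convert h0 using 1
  push_cast
  ring

lemma d2W (a b : ℝ) :
    D2 (Wf c) (a, b, t) = (3 * Cf c (a, b, t) ^ 2 - 1) * D2 (Cf c) (a, b, t) := by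
  apply D2_eq (nice_W hsol) ht
  have h0 : HasDerivAt (fun y => Wf c (a, y, t)) _ b :=
    ((hasDerivAt_D2 (nice_C hsol) ht (x₁ := a) (x₂ := b)).pow 3).sub
    (hasDerivAt_D2 (nice_C hsol) ht (x₁ := a) (x₂ := b))
  convert h0 using 1
  push_cast
  ring

/-- the PDE in canonical form. -/
lemma pde_bridge (a b : ℝ) :
    Dt (Cf c) (a, b, t) = Lp (Wf c) (a, b, t)
      - U1f u (a, b, t) * D1 (Cf c) (a, b, t)
      - U2f u (a, b, t) * D2 (Cf c) (a, b, t)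
      - γ * Lp (Lp (Cf c)) (a, b, t) := by
  have h0 := hsol.pde a b t ht
  have r1 : deriv (fun s => c a b s) t = Dt (Cf c) (a, b, t) :=
    (hasDerivAt_Dt (nice_C hsol) ht).deriv
  have r2 : deriv (fun y => c y b t) a = D1 (Cf c) (a, b, t) :=
    (hasDerivAt_D1 (nice_C hsol) ht).deriv
  have r3 : deriv (fun y => c a y t) b = D2 (Cf c) (a, b, t) :=
    (hasDerivAt_D2 (nice_C hsol) ht).deriv
  have r4 : lap2 (fun p q => (c p q t) ^ 3 - c p q t) a b = Lp (Wf c) (a, b, t) :=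
    lap_bridge (nice_W hsol) ht a b
  have r5 : lap2 (fun p q => lap2 (fun p' q' => c p' q' t) p q) a b
      = Lp (Lp (Cf c)) (a, b, t) := by
    have e : (fun p q => lap2 (fun p' q' => c p' q' t) p q)
        = fun p q => Lp (Cf c) (p, q, t) :=
      funext fun p => funext fun q => lap_bridge (nice_C hsol) ht p q
    rw [e]
    exact lap_bridge ((nice_C hsol).lp) ht a b
  rw [r1, r2, r3, r4, r5] at h0
  have e1 : U1f u (a, b, t) = (u a b t).1 := rfl
  have e2 : U2f u (a, b, t) = (u a b t).2 := rfl
  rw [e1, e2]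
  linarith

lemma div_bridge (a b : ℝ) :
    D1 (U1f u) (a, b, t) + D2 (U2f u) (a, b, t) = 0 := by
  have h0 := hsol.udivfree a b t ht.le
  have r1 : deriv (fun y => (u y b t).1) a = D1 (U1f u) (a, b, t) :=
    (hasDerivAt_D1 (nice_U1 hsol) ht).deriv
  have r2 : deriv (fun y => (u a y t).2) b = D2 (U2f u) (a, b, t) :=
    (hasDerivAt_D2 (nice_U2 hsol) ht).deriv
  rw [r1, r2] at h0
  exact h0

lemma claimA :
    J (fun p => U1f u p * D1 (Qf c cbar) p + U2f u p * D2 (Qf c cbar) p) t = 0 := by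
  have hU1 := nice_U1 hsol; have hU2 := nice_U2 hsol; have hQ := nice_Q hsol
  have sU1 : SC (U1f u) t := hU1.slice ht.le
  have sU2 : SC (U2f u) t := hU2.slice ht.le
  have sQ : SC (Qf c cbar) t := hQ.slice ht.le
  have sdU1 : SC (D1 (U1f u)) t := hU1.d1.slice ht.le
  have sdU2 : SC (D2 (U2f u)) t := hU2.d2.slice ht.le
  have sd1Q : SC (D1 (Qf c cbar)) t := hQ.d1.slice ht.le
  have sd2Q : SC (D2 (Qf c cbar)) t := hQ.d2.slice ht.le
  have h1 : J (fun p => U1f u p * D1 (Qf c cbar) p) t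
      = - J (fun p => D1 (U1f u) p * Qf c cbar p) t :=
    IBPx (fun a b => hasDerivAt_D1 hU1 ht) (fun a b => hasDerivAt_D1 hQ ht)
      sU1 sQ sdU1 sd1Q ((per_U1 hsol t).bdry1 (per_Q hsol t))
  have h2 : J (fun p => U2f u p * D2 (Qf c cbar) p) t
      = - J (fun p => D2 (U2f u) p * Qf c cbar p) t :=
    IBPy (fun a b => hasDerivAt_D2 hU2 ht) (fun a b => hasDerivAt_D2 hQ ht)
      sdU2 sd2Q ((per_U2 hsol t).bdry2 (per_Q hsol t))
  rw [J_add (sU1.mul sd1Q) (sU2.mul sd2Q), h1, h2]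
  have h3 : J (fun p => D1 (U1f u) p * Qf c cbar p) t
      + J (fun p => D2 (U2f u) p * Qf c cbar p) t = 0 := by
    rw [← J_add (sdU1.mul sQ) (sdU2.mul sQ)]
    have e : J (fun p => D1 (U1f u) p * Qf c cbar p + D2 (U2f u) p * Qf c cbar p) t
        = J (fun _ => (0:ℝ)) t := by
      apply J_congr
      intro a b
      show D1 (U1f u) (a,b,t) * Qf c cbar (a,b,t)
          + D2 (U2f u) (a,b,t) * Qf c cbar (a,b,t) = 0
      have hd := div_bridge hsol ht a b
      calc D1 (U1f u) (a,b,t) * Qf c cbar (a,b,t)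
            + D2 (U2f u) (a,b,t) * Qf c cbar (a,b,t)
          = (D1 (U1f u) (a,b,t) + D2 (U2f u) (a,b,t)) * Qf c cbar (a,b,t) := by ring
        _ = 0 := by rw [hd]; ring
    rw [e, J_zero]
  linarith

lemma claimB :
    J (fun p => Vf c cbar p * Lp (Lp (Cf c)) p) t = J (fun p => Lp (Cf c) p ^ 2) t := by
  have hC := nice_C hsol; have hV := nice_V hsol
  have hG : Nice (Lp (Cf c)) := hC.lp
  have sV : SC (Vf c cbar) t := hV.slice ht.le
  have sG : SC (Lp (Cf c)) t := hG.slice ht.le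
  have sd1C : SC (D1 (Cf c)) t := hC.d1.slice ht.le
  have sd2C : SC (D2 (Cf c)) t := hC.d2.slice ht.le
  have sd1G : SC (D1 (Lp (Cf c))) t := hG.d1.slice ht.le
  have sd2G : SC (D2 (Lp (Cf c))) t := hG.d2.slice ht.le
  have sd1d1G : SC (D1 (D1 (Lp (Cf c)))) t := hG.d1.d1.slice ht.le
  have sd2d2G : SC (D2 (D2 (Lp (Cf c)))) t := hG.d2.d2.slice ht.le
  have sd1d1C : SC (D1 (D1 (Cf c))) t := hC.d1.d1.slice ht.le
  have sd2d2C : SC (D2 (D2 (Cf c))) t := hC.d2.d2.slice ht.le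
  have pV := per_V hsol t
  have pG : PerT (Lp (Cf c)) t := (per_C hsol t).lp hC ht
  have pC := per_C hsol t
  have h1 : J (fun p => Vf c cbar p * D1 (D1 (Lp (Cf c))) p) t
      = - J (fun p => D1 (Cf c) p * D1 (Lp (Cf c)) p) t :=
    IBPx (fun a b => (hasDerivAt_D1 hC ht).sub_const cbar)
      (fun a b => hasDerivAt_D1 hG.d1 ht)
      sV sd1G sd1C sd1d1G (pV.bdry1 (pG.d1 hG ht))
  have h2 : J (fun p => D1 (Cf c) p * D1 (Lp (Cf c)) p) t
      = - J (fun p => D1 (D1 (Cf c)) p * Lp (Cf c) p) t :=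
    IBPx (fun a b => hasDerivAt_D1 hC.d1 ht) (fun a b => hasDerivAt_D1 hG ht)
      sd1C sG sd1d1C sd1G ((pC.d1 hC ht).bdry1 pG)
  have h3 : J (fun p => Vf c cbar p * D2 (D2 (Lp (Cf c))) p) t
      = - J (fun p => D2 (Cf c) p * D2 (Lp (Cf c)) p) t :=
    IBPy (fun a b => (hasDerivAt_D2 hC ht).sub_const cbar)
      (fun a b => hasDerivAt_D2 hG.d2 ht)
      sd2C sd2d2G (pV.bdry2 (pG.d2 hG ht))
  have h4 : J (fun p => D2 (Cf c) p * D2 (Lp (Cf c)) p) t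
      = - J (fun p => D2 (D2 (Cf c)) p * Lp (Cf c) p) t :=
    IBPy (fun a b => hasDerivAt_D2 hC.d2 ht) (fun a b => hasDerivAt_D2 hG ht)
      sd2d2C sd2G ((pC.d2 hC ht).bdry2 pG)
  have e0 : J (fun p => Vf c cbar p * Lp (Lp (Cf c)) p) t
      = J (fun p => Vf c cbar p * D1 (D1 (Lp (Cf c))) p
          + Vf c cbar p * D2 (D2 (Lp (Cf c))) p) t := by
    apply J_congr
    intro a b
    show Vf c cbar (a,b,t) * Lp (Lp (Cf c)) (a,b,t) = _
    simp only [Lp]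
    ring
  have e1 : J (fun p => D1 (D1 (Cf c)) p * Lp (Cf c) p) t
      + J (fun p => D2 (D2 (Cf c)) p * Lp (Cf c) p) t
      = J (fun p => Lp (Cf c) p ^ 2) t := by
    rw [← J_add (sd1d1C.mul sG) (sd2d2C.mul sG)]
    apply J_congr
    intro a b
    show D1 (D1 (Cf c)) (a,b,t) * Lp (Cf c) (a,b,t)
        + D2 (D2 (Cf c)) (a,b,t) * Lp (Cf c) (a,b,t) = Lp (Cf c) (a,b,t) ^ 2
    calc D1 (D1 (Cf c)) (a,b,t) * Lp (Cf c) (a,b,t)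
          + D2 (D2 (Cf c)) (a,b,t) * Lp (Cf c) (a,b,t)
        = (D1 (D1 (Cf c)) (a,b,t) + D2 (D2 (Cf c)) (a,b,t)) * Lp (Cf c) (a,b,t) := by ring
      _ = Lp (Cf c) (a,b,t) ^ 2 := by rw [show D1 (D1 (Cf c)) (a,b,t) + D2 (D2 (Cf c)) (a,b,t) = Lp (Cf c) (a,b,t) from rfl]; ring
  rw [e0, J_add (sV.mul sd1d1G) (sV.mul sd2d2G), h1, h2, h3, h4]
  linarith

lemma claimC :
    J (fun p => Vf c cbar p * Lp (Wf c) p) t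
      ≤ J (fun p => D1 (Cf c) p ^ 2 + D2 (Cf c) p ^ 2) t := by
  have hC := nice_C hsol; have hV := nice_V hsol; have hW := nice_W hsol
  have sV : SC (Vf c cbar) t := hV.slice ht.le
  have sC : SC (Cf c) t := hC.slice ht.le
  have sd1C : SC (D1 (Cf c)) t := hC.d1.slice ht.le
  have sd2C : SC (D2 (Cf c)) t := hC.d2.slice ht.le
  have sd1W : SC (D1 (Wf c)) t := hW.d1.slice ht.le
  have sd2W : SC (D2 (Wf c)) t := hW.d2.slice ht.le
  have sd1d1W : SC (D1 (D1 (Wf c))) t := hW.d1.d1.slice ht.le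
  have sd2d2W : SC (D2 (D2 (Wf c))) t := hW.d2.d2.slice ht.le
  have pV := per_V hsol t
  have pW := per_W hsol t
  have h1 : J (fun p => Vf c cbar p * D1 (D1 (Wf c)) p) t
      = - J (fun p => D1 (Cf c) p * D1 (Wf c) p) t :=
    IBPx (fun a b => (hasDerivAt_D1 hC ht).sub_const cbar)
      (fun a b => hasDerivAt_D1 hW.d1 ht)
      sV sd1W sd1C sd1d1W (pV.bdry1 (pW.d1 hW ht))
  have h3 : J (fun p => Vf c cbar p * D2 (D2 (Wf c)) p) t
      = - J (fun p => D2 (Cf c) p * D2 (Wf c) p) t :=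
    IBPy (fun a b => (hasDerivAt_D2 hC ht).sub_const cbar)
      (fun a b => hasDerivAt_D2 hW.d2 ht)
      sd2C sd2d2W (pV.bdry2 (pW.d2 hW ht))
  have e0 : J (fun p => Vf c cbar p * Lp (Wf c) p) t
      = J (fun p => Vf c cbar p * D1 (D1 (Wf c)) p + Vf c cbar p * D2 (D2 (Wf c)) p) t := by
    apply J_congr
    intro a b
    show Vf c cbar (a,b,t) * Lp (Wf c) (a,b,t) = _
    simp only [Lp]
    ring
  have e1 : J (fun p => D1 (Cf c) p * D1 (Wf c) p) t
      + J (fun p => D2 (Cf c) p * D2 (Wf c) p) t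
      = J (fun p => (3 * Cf c p ^ 2 - 1) * (D1 (Cf c) p ^ 2 + D2 (Cf c) p ^ 2)) t := by
    rw [← J_add (sd1C.mul sd1W) (sd2C.mul sd2W)]
    apply J_congr
    intro a b
    show D1 (Cf c) (a,b,t) * D1 (Wf c) (a,b,t) + D2 (Cf c) (a,b,t) * D2 (Wf c) (a,b,t) = _
    rw [d1W hsol ht a b, d2W hsol ht a b]
    ring
  have e2 : J (fun p => (-1) * ((3 * Cf c p ^ 2 - 1) * (D1 (Cf c) p ^ 2 + D2 (Cf c) p ^ 2))) t
      ≤ J (fun p => D1 (Cf c) p ^ 2 + D2 (Cf c) p ^ 2) t := by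
    apply J_mono
    · exact continuous_const.mul ((continuous_const.mul (sC.pow 2) |>.sub continuous_const).mul
        ((sd1C.pow 2).add (sd2C.pow 2)))
    · exact (sd1C.pow 2).add (sd2C.pow 2)
    · intro a b
      show (-1) * ((3 * Cf c (a,b,t) ^ 2 - 1) * (D1 (Cf c) (a,b,t) ^ 2 + D2 (Cf c) (a,b,t) ^ 2))
          ≤ D1 (Cf c) (a,b,t) ^ 2 + D2 (Cf c) (a,b,t) ^ 2
      nlinarith [sq_nonneg (Cf c (a,b,t)), sq_nonneg (D1 (Cf c) (a,b,t)), sq_nonneg (D2 (Cf c) (a,b,t)),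
        mul_nonneg (sq_nonneg (Cf c (a,b,t))) (add_nonneg (sq_nonneg (D1 (Cf c) (a,b,t))) (sq_nonneg (D2 (Cf c) (a,b,t))))]
  have e3 : J (fun p => (-1) * ((3 * Cf c p ^ 2 - 1) * (D1 (Cf c) p ^ 2 + D2 (Cf c) p ^ 2))) t
      = - J (fun p => (3 * Cf c p ^ 2 - 1) * (D1 (Cf c) p ^ 2 + D2 (Cf c) p ^ 2)) t := by
    rw [J_const_mul]; ring
  rw [e0, J_add (sV.mul sd1d1W) (sV.mul sd2d2W), h1, h3]
  linarith

lemma claimG :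
    J (fun p => D1 (Cf c) p ^ 2 + D2 (Cf c) p ^ 2) t
      = - J (fun p => Vf c cbar p * Lp (Cf c) p) t := by
  have hC := nice_C hsol; have hV := nice_V hsol
  have sV : SC (Vf c cbar) t := hV.slice ht.le
  have sd1C : SC (D1 (Cf c)) t := hC.d1.slice ht.le
  have sd2C : SC (D2 (Cf c)) t := hC.d2.slice ht.le
  have sd1d1C : SC (D1 (D1 (Cf c))) t := hC.d1.d1.slice ht.le
  have sd2d2C : SC (D2 (D2 (Cf c))) t := hC.d2.d2.slice ht.le
  have pV := per_V hsol t
  have pC := per_C hsol t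
  have h1 : J (fun p => D1 (Cf c) p * D1 (Cf c) p) t
      = - J (fun p => D1 (D1 (Cf c)) p * Vf c cbar p) t :=
    IBPx (fun a b => hasDerivAt_D1 hC.d1 ht)
      (fun a b => (hasDerivAt_D1 hC ht).sub_const cbar)
      sd1C sV sd1d1C sd1C ((pC.d1 hC ht).bdry1 pV)
  have h2 : J (fun p => D2 (Cf c) p * D2 (Cf c) p) t
      = - J (fun p => D2 (D2 (Cf c)) p * Vf c cbar p) t :=
    IBPy (fun a b => hasDerivAt_D2 hC.d2 ht)
      (fun a b => (hasDerivAt_D2 hC ht).sub_const cbar)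
      sd2d2C sd2C ((pC.d2 hC ht).bdry2 pV)
  have e0 : J (fun p => D1 (Cf c) p ^ 2 + D2 (Cf c) p ^ 2) t
      = J (fun p => D1 (Cf c) p * D1 (Cf c) p) t + J (fun p => D2 (Cf c) p * D2 (Cf c) p) t := by
    rw [← J_add (sd1C.mul sd1C) (sd2C.mul sd2C)]
    apply J_congr
    intro a b
    show D1 (Cf c) (a,b,t) ^ 2 + D2 (Cf c) (a,b,t) ^ 2 = _
    ring
  have e1 : J (fun p => D1 (D1 (Cf c)) p * Vf c cbar p) t
      + J (fun p => D2 (D2 (Cf c)) p * Vf c cbar p) t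
      = J (fun p => Vf c cbar p * Lp (Cf c) p) t := by
    rw [← J_add (sd1d1C.mul sV) (sd2d2C.mul sV)]
    apply J_congr
    intro a b
    show D1 (D1 (Cf c)) (a,b,t) * Vf c cbar (a,b,t)
        + D2 (D2 (Cf c)) (a,b,t) * Vf c cbar (a,b,t) = Vf c cbar (a,b,t) * Lp (Cf c) (a,b,t)
    simp only [Lp]
    ring
  rw [e0, h1, h2]
  linarith

lemma key_ineq (hγ : 0 < γ) :
    J (Dt (Qf c cbar)) t
      ≤ - γ * J (fun p => Lp (Cf c) p ^ 2) t + (1/γ) * J (Qf c cbar) t := by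
  have hC := nice_C hsol; have hV := nice_V hsol; have hQ := nice_Q hsol
  have hU1 := nice_U1 hsol; have hU2 := nice_U2 hsol; have hW := nice_W hsol
  have sU1 : SC (U1f u) t := hU1.slice ht.le
  have sU2 : SC (U2f u) t := hU2.slice ht.le
  have sd1Q : SC (D1 (Qf c cbar)) t := hQ.d1.slice ht.le
  have sd2Q : SC (D2 (Qf c cbar)) t := hQ.d2.slice ht.le
  have sV : SC (Vf c cbar) t := hV.slice ht.le
  have sLLC : SC (Lp (Lp (Cf c))) t := hC.lp.lp.slice ht.le
  have sLW : SC (Lp (Wf c)) t := hW.lp.slice ht.le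
  have sG : SC (Lp (Cf c)) t := hC.lp.slice ht.le
  have scT1 : SC (fun p => U1f u p * D1 (Qf c cbar) p + U2f u p * D2 (Qf c cbar) p) t :=
    (sU1.mul sd1Q).add (sU2.mul sd2Q)
  have scT2 : SC (fun p => Vf c cbar p * Lp (Lp (Cf c)) p) t := sV.mul sLLC
  have scT3 : SC (fun p => Vf c cbar p * Lp (Wf c) p) t := sV.mul sLW
  have e0 : J (Dt (Qf c cbar)) t
      = J (fun p => (-1) * (U1f u p * D1 (Qf c cbar) p + U2f u p * D2 (Qf c cbar) p)
          + ((-(2*γ)) * (Vf c cbar p * Lp (Lp (Cf c)) p)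
            + 2 * (Vf c cbar p * Lp (Wf c) p))) t := by
    apply J_congr
    intro a b
    show Dt (Qf c cbar) (a,b,t) = _
    rw [dtQ hsol ht a b, pde_bridge hsol ht a b, d1Q hsol ht a b, d2Q hsol ht a b]
    ring
  have scM1 : SC (fun p => (-1:ℝ) * (U1f u p * D1 (Qf c cbar) p + U2f u p * D2 (Qf c cbar) p)) t :=
    continuous_const.mul scT1
  have scM2 : SC (fun p => (-(2*γ)) * (Vf c cbar p * Lp (Lp (Cf c)) p)) t :=
    continuous_const.mul scT2
  have scM3 : SC (fun p => (2:ℝ) * (Vf c cbar p * Lp (Wf c) p)) t :=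
    continuous_const.mul scT3
  rw [e0, J_add scM1 (scM2.add scM3), J_add scM2 scM3,
    J_const_mul, J_const_mul, J_const_mul, claimA hsol ht, claimB hsol ht]
  have hCl := claimC hsol ht
  have hGl := claimG hsol ht
  have hcs : |J (fun p => Vf c cbar p * Lp (Cf c) p) t|
      ≤ Real.sqrt (J (fun p => Vf c cbar p ^ 2) t)
        * Real.sqrt (J (fun p => Lp (Cf c) p ^ 2) t) := J_cs sV sG
  have hQeq : J (fun p => Vf c cbar p ^ 2) t = J (Qf c cbar) t := rfl
  rw [hQeq] at hcs
  have hED : 0 ≤ J (fun p => Lp (Cf c) p ^ 2) t := J_nonneg (fun a b => sq_nonneg _)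
  have hEE : 0 ≤ J (Qf c cbar) t := J_nonneg (fun a b => sq_nonneg _)
  set ED := J (fun p => Lp (Cf c) p ^ 2) t with hEDdef
  set EE := J (Qf c cbar) t with hEEdef
  have key2 : 2 * (Real.sqrt EE * Real.sqrt ED) ≤ γ * ED + (1/γ) * EE := by
    have hs : Real.sqrt (γ * ED) * Real.sqrt ((1/γ) * EE) = Real.sqrt EE * Real.sqrt ED := by
      rw [← Real.sqrt_mul (mul_nonneg hγ.le hED),
        show γ * ED * ((1/γ) * EE) = EE * ED by field_simp,
        Real.sqrt_mul hEE]
    nlinarith [sq_nonneg (Real.sqrt (γ * ED) - Real.sqrt ((1/γ) * EE)),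
      Real.sq_sqrt (mul_nonneg hγ.le hED),
      Real.sq_sqrt (mul_nonneg (le_of_lt (by positivity : (0:ℝ) < 1/γ)) hEE), hs]
  have habs : - J (fun p => Vf c cbar p * Lp (Cf c) p) t ≤ Real.sqrt EE * Real.sqrt ED :=
    le_trans (neg_le_abs _) hcs
  linarith

end Solution

end

end ACH

/-- Lemma 2.2 (second part) of Feng–Feng–Iyer–Thiffeault: if the time average of
`‖Δc‖²_{L²}` over `[t₀, t₀+τ]` is at least `((2+2γμ)/γ²)‖c(t₀)−c̄‖²_{L²}`, then the
variance of the advective Cahn–Hilliard solution decays, `‖c(t₀+τ)−c̄‖ ≤ e^{−μτ}‖c(t₀)−c̄‖`. -/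
theorem advective_cahn_hilliard_conditional_decay
    (γ : ℝ) (hγ : 0 < γ) (u : ℝ → ℝ → ℝ → ℝ × ℝ) (c : ℝ → ℝ → ℝ → ℝ) (cbar : ℝ)
    (hsol : IsAdvCahnHilliardSolution γ u c cbar)
    (t₀ μ τ : ℝ) (ht₀ : 0 ≤ t₀) (hμ : 0 < μ) (hτ : τ ∈ Set.Ioo (0:ℝ) (γ * Real.log 2))
    (hlarge : ((2 + 2 * γ * μ) / γ ^ 2) * sqL2T2 (fun a b => c a b t₀ - cbar)
      ≤ (1 / τ) * ∫ s in t₀..(t₀ + τ), sqL2T2 (fun a b => lap2 (fun p q => c p q s) a b)) :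
    Real.sqrt (sqL2T2 (fun a b => c a b (t₀ + τ) - cbar))
      ≤ Real.exp (-μ * τ) * Real.sqrt (sqL2T2 (fun a b => c a b t₀ - cbar)) := by
  open ACH in
  have hτ0 : 0 < τ := hτ.1
  have hτlog : τ < γ * Real.log 2 := hτ.2
  have hγne : γ ≠ 0 := ne_of_gt hγ
  -- canonical energy and dissipation
  set Q : ℝ×ℝ×ℝ → ℝ := Qf c cbar with hQdef
  set Gsq : ℝ×ℝ×ℝ → ℝ := fun p => Lp (Cf c) p ^ 2 with hGsqdef
  have hQ : Nice Q := nice_Q hsol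
  have hGsqN : Nice Gsq := (nice_C hsol).lp.pow 2
  have hEc : ContinuousOn (J Q) (Ici 0) := J_continuousOn hQ.continuousOn
  have hDc : ContinuousOn (J Gsq) (Ici 0) := J_continuousOn hGsqN.continuousOn
  have hEder : ∀ s : ℝ, 0 < s → HasDerivAt (J Q) (J (Dt Q) s) s :=
    fun s hs => J_hasDerivAt hQ hs
  have hDnn : ∀ s : ℝ, 0 ≤ J Gsq s := fun s => J_nonneg (fun a b => sq_nonneg _)
  have hEnn : ∀ s : ℝ, 0 ≤ J Q s := fun s => J_nonneg (fun a b => sq_nonneg _)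
  have key : ∀ s : ℝ, 0 < s → J (Dt Q) s ≤ - γ * J Gsq s + (1/γ) * J Q s :=
    fun s hs => key_ineq hsol hs hγ
  have hsub : Icc t₀ (t₀ + τ) ⊆ Ici (0:ℝ) := fun s hs => le_trans ht₀ hs.1
  have hle : t₀ ≤ t₀ + τ := by linarith
  -- identify sqL2T2 expressions
  have hE0 : sqL2T2 (fun a b => c a b t₀ - cbar) = J Q t₀ := rfl
  have hE1 : sqL2T2 (fun a b => c a b (t₀ + τ) - cbar) = J Q (t₀ + τ) := rfl
  have hDid : ∀ s : ℝ, 0 < s →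
      sqL2T2 (fun a b => lap2 (fun p q => c p q s) a b) = J Gsq s := by
    intro s hs
    apply intervalIntegral.integral_congr
    intro a _
    apply intervalIntegral.integral_congr
    intro b _
    show (lap2 (fun p q => c p q s) a b) ^ 2 = Gsq (a, b, s)
    rw [show lap2 (fun p q => c p q s) a b = Lp (Cf c) (a, b, s) from
      lap_bridge (nice_C hsol) hs a b]
  -- Part 1: E s ≤ 2 E t₀ on [t₀, t₀+τ]
  have hexp_der : ∀ s : ℝ, HasDerivAt (fun r => Real.exp (-((r - t₀)/γ)))
      (Real.exp (-((s - t₀)/γ)) * (-(1/γ))) s := by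
    intro s
    have h1 : HasDerivAt (fun r : ℝ => -((r - t₀)/γ)) (-(1/γ)) s := by
      exact (((hasDerivAt_id s).sub_const t₀).div_const γ).neg
    simpa [mul_comm] using h1.exp
  have hanti1 : AntitoneOn (fun s => J Q s * Real.exp (-((s - t₀)/γ))) (Icc t₀ (t₀ + τ)) := by
    apply antitoneOn_of_deriv_nonpos (convex_Icc _ _)
    · exact (hEc.mono hsub).mul (Real.continuous_exp.comp (by fun_prop)).continuousOn
    · rw [interior_Icc]
      intro s hs
      have hs0 : 0 < s := lt_of_le_of_lt ht₀ hs.1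
      exact ((hEder s hs0).mul (hexp_der s)).differentiableAt.differentiableWithinAt
    · rw [interior_Icc]
      intro s hs
      have hs0 : 0 < s := lt_of_le_of_lt ht₀ hs.1
      rw [show deriv (fun s => J Q s * Real.exp (-((s - t₀)/γ))) s = _ from ((hEder s hs0).mul (hexp_der s)).deriv]
      have h1 := key s hs0
      have h2 := hDnn s
      have h3 : (0:ℝ) < Real.exp (-((s - t₀)/γ)) := Real.exp_pos _
      have h4 : J (Dt Q) s - (1/γ) * J Q s ≤ 0 := by nlinarith
      have h5 : Real.exp (-((s - t₀)/γ)) * (J (Dt Q) s - (1/γ) * J Q s)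
          ≤ Real.exp (-((s - t₀)/γ)) * 0 := mul_le_mul_of_nonneg_left h4 h3.le
      calc J (Dt Q) s * Real.exp (-((s - t₀)/γ))
            + J Q s * (Real.exp (-((s - t₀)/γ)) * (-(1/γ)))
          = Real.exp (-((s - t₀)/γ)) * (J (Dt Q) s - (1/γ) * J Q s) := by ring
        _ ≤ 0 := by linarith
  have hmem0 : t₀ ∈ Icc t₀ (t₀ + τ) := ⟨le_refl _, hle⟩
  have bound2 : ∀ s ∈ Icc t₀ (t₀ + τ), J Q s ≤ 2 * J Q t₀ := by
    intro s hs
    have h1 := hanti1 hmem0 hs hs.1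
    simp only [sub_self, zero_div, neg_zero, Real.exp_zero, mul_one] at h1
    -- h1 : J Q s * exp(-((s-t₀)/γ)) ≤ J Q t₀
    have hx : (s - t₀)/γ ≤ Real.log 2 := by
      rw [div_le_iff₀ hγ]
      have : s ≤ t₀ + τ := hs.2
      nlinarith [hτlog]
    have hexple : Real.exp ((s - t₀)/γ) ≤ 2 := by
      calc Real.exp ((s - t₀)/γ) ≤ Real.exp (Real.log 2) := Real.exp_le_exp.2 hx
        _ = 2 := Real.exp_log (by norm_num)
    have hid : J Q s = (J Q s * Real.exp (-((s - t₀)/γ))) * Real.exp ((s - t₀)/γ) := by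
      rw [mul_assoc, ← Real.exp_add]
      simp
    rw [hid]
    calc (J Q s * Real.exp (-((s - t₀)/γ))) * Real.exp ((s - t₀)/γ)
        ≤ J Q t₀ * Real.exp ((s - t₀)/γ) :=
          mul_le_mul_of_nonneg_right h1 (Real.exp_pos _).le
      _ ≤ J Q t₀ * 2 := mul_le_mul_of_nonneg_left hexple (hEnn t₀)
      _ = 2 * J Q t₀ := by ring
  -- Part 2: integrated inequality
  have hρc : ContinuousOn (fun σ => γ * J Gsq σ - (1/γ) * J Q σ) (Ici 0) :=
    (continuousOn_const.mul hDc).sub (continuousOn_const.mul hEc)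
  have hρint : IntervalIntegrable (fun σ => γ * J Gsq σ - (1/γ) * J Q σ) volume t₀ (t₀ + τ) := by
    apply ContinuousOn.intervalIntegrable
    apply hρc.mono
    rw [uIcc_of_le hle]
    exact hsub
  have hanti2 : AntitoneOn (fun s => J Q s
      + ∫ σ in t₀..s, (γ * J Gsq σ - (1/γ) * J Q σ)) (Icc t₀ (t₀ + τ)) := by
    apply antitoneOn_of_deriv_nonpos (convex_Icc _ _)
    · apply ContinuousOn.add (hEc.mono hsub)
      have hcp : ContinuousOn (fun s => ∫ σ in t₀..s, (γ * J Gsq σ - (1/γ) * J Q σ))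
          (uIcc t₀ (t₀ + τ)) := by
        apply intervalIntegral.continuousOn_primitive_interval
        rw [uIcc_of_le hle]
        exact (hρc.mono hsub).integrableOn_Icc
      rw [uIcc_of_le hle] at hcp
      exact hcp
    · rw [interior_Icc]
      intro s hs
      have hs0 : 0 < s := lt_of_le_of_lt ht₀ hs.1
      have hint : IntervalIntegrable (fun σ => γ * J Gsq σ - (1/γ) * J Q σ) volume t₀ s := by
        apply ContinuousOn.intervalIntegrable
        apply hρc.mono
        rw [uIcc_of_le hs.1.le]
        intro x hx
        exact le_trans ht₀ hx.1
      have hmeas : StronglyMeasurableAtFilter (fun σ => γ * J Gsq σ - (1/γ) * J Q σ)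
          (nhds s) volume :=
        ⟨Ioi 0, Ioi_mem_nhds hs0,
          ((hρc.mono Ioi_subset_Ici_self).aestronglyMeasurable measurableSet_Ioi)⟩
      have hca : ContinuousAt (fun σ => γ * J Gsq σ - (1/γ) * J Q σ) s :=
        hρc.continuousAt (Filter.mem_of_superset (Ioi_mem_nhds hs0) Ioi_subset_Ici_self)
      exact ((hEder s hs0).add
        (intervalIntegral.integral_hasDerivAt_right hint hmeas hca)).differentiableAt.differentiableWithinAt
    · rw [interior_Icc]
      intro s hs
      have hs0 : 0 < s := lt_of_le_of_lt ht₀ hs.1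
      have hint : IntervalIntegrable (fun σ => γ * J Gsq σ - (1/γ) * J Q σ) volume t₀ s := by
        apply ContinuousOn.intervalIntegrable
        apply hρc.mono
        rw [uIcc_of_le hs.1.le]
        intro x hx
        exact le_trans ht₀ hx.1
      have hmeas : StronglyMeasurableAtFilter (fun σ => γ * J Gsq σ - (1/γ) * J Q σ)
          (nhds s) volume :=
        ⟨Ioi 0, Ioi_mem_nhds hs0,
          ((hρc.mono Ioi_subset_Ici_self).aestronglyMeasurable measurableSet_Ioi)⟩
      have hca : ContinuousAt (fun σ => γ * J Gsq σ - (1/γ) * J Q σ) s :=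
        hρc.continuousAt (Filter.mem_of_superset (Ioi_mem_nhds hs0) Ioi_subset_Ici_self)
      rw [show deriv (fun s => J Q s
          + ∫ σ in t₀..s, (γ * J Gsq σ - (1/γ) * J Q σ)) s = _ from ((hEder s hs0).add
        (intervalIntegral.integral_hasDerivAt_right hint hmeas hca)).deriv]
      have h1 := key s hs0
      linarith
  have hmem1 : t₀ + τ ∈ Icc t₀ (t₀ + τ) := ⟨hle, le_refl _⟩
  have hψ := hanti2 hmem0 hmem1 hle
  simp only [intervalIntegral.integral_same, add_zero] at hψ
  -- split the integral
  have hDint : IntervalIntegrable (J Gsq) volume t₀ (t₀ + τ) := by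
    apply ContinuousOn.intervalIntegrable
    apply hDc.mono
    rw [uIcc_of_le hle]
    exact hsub
  have hEint : IntervalIntegrable (J Q) volume t₀ (t₀ + τ) := by
    apply ContinuousOn.intervalIntegrable
    apply hEc.mono
    rw [uIcc_of_le hle]
    exact hsub
  have hsplit : (∫ σ in t₀..(t₀ + τ), (γ * J Gsq σ - (1/γ) * J Q σ))
      = γ * (∫ σ in t₀..(t₀ + τ), J Gsq σ) - (1/γ) * ∫ σ in t₀..(t₀ + τ), J Q σ := by
    rw [intervalIntegral.integral_sub (hDint.const_mul γ) (hEint.const_mul (1/γ)),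
      intervalIntegral.integral_const_mul, intervalIntegral.integral_const_mul]
  rw [hsplit] at hψ
  -- bound ∫ J Q
  have hEbd : (∫ σ in t₀..(t₀ + τ), J Q σ) ≤ τ * (2 * J Q t₀) := by
    have h1 : (∫ σ in t₀..(t₀ + τ), J Q σ) ≤ ∫ _ in t₀..(t₀ + τ), (2 * J Q t₀) := by
      apply intervalIntegral.integral_mono_on hle hEint intervalIntegrable_const
      exact fun x hx => bound2 x hx
    rw [intervalIntegral.integral_const] at h1
    simpa using h1
  -- bound ∫ J Gsq from hlarge
  have hDbd : τ * ((2 + 2 * γ * μ) / γ ^ 2 * J Q t₀) ≤ ∫ σ in t₀..(t₀ + τ), J Gsq σ := by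
    have hcongr : (∫ s in t₀..(t₀ + τ), sqL2T2 (fun a b => lap2 (fun p q => c p q s) a b))
        = ∫ σ in t₀..(t₀ + τ), J Gsq σ := by
      apply intervalIntegral.integral_congr_ae
      apply Filter.Eventually.of_forall
      intro s hsI
      rw [uIoc_of_le hle] at hsI
      exact hDid s (lt_of_le_of_lt ht₀ hsI.1)
    rw [hE0, hcongr] at hlarge
    calc τ * ((2 + 2 * γ * μ) / γ ^ 2 * J Q t₀)
        ≤ τ * ((1 / τ) * ∫ σ in t₀..(t₀ + τ), J Gsq σ) :=
          mul_le_mul_of_nonneg_left hlarge hτ0.le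
      _ = ∫ σ in t₀..(t₀ + τ), J Gsq σ := by field_simp
  -- combine
  have hfinal : J Q (t₀ + τ) ≤ (1 - 2 * μ * τ) * J Q t₀ := by
    have h1 : γ * (τ * ((2 + 2 * γ * μ) / γ ^ 2 * J Q t₀))
        ≤ γ * ∫ σ in t₀..(t₀ + τ), J Gsq σ := mul_le_mul_of_nonneg_left hDbd hγ.le
    have h2 : (1/γ) * (∫ σ in t₀..(t₀ + τ), J Q σ) ≤ (1/γ) * (τ * (2 * J Q t₀)) :=
      mul_le_mul_of_nonneg_left hEbd (by positivity)
    have h3 : γ * (τ * ((2 + 2 * γ * μ) / γ ^ 2 * J Q t₀))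
        = (2 * τ / γ) * J Q t₀ + (2 * μ * τ) * J Q t₀ := by
      field_simp
    have h4 : (1/γ) * (τ * (2 * J Q t₀)) = (2 * τ / γ) * J Q t₀ := by
      field_simp
    nlinarith [hψ]
  have hexpbd : (1 - 2 * μ * τ) ≤ Real.exp (-μ * τ) ^ 2 := by
    have h1 := Real.add_one_le_exp (-μ * τ + -μ * τ)
    calc (1 : ℝ) - 2 * μ * τ = (-μ * τ + -μ * τ) + 1 := by ring
      _ ≤ Real.exp (-μ * τ + -μ * τ) := h1
      _ = Real.exp (-μ * τ) ^ 2 := by rw [Real.exp_add]; ring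
  have hfinal2 : J Q (t₀ + τ) ≤ Real.exp (-μ * τ) ^ 2 * J Q t₀ :=
    le_trans hfinal (mul_le_mul_of_nonneg_right hexpbd (hEnn t₀))
  rw [hE0, hE1]
  calc Real.sqrt (J Q (t₀ + τ)) ≤ Real.sqrt (Real.exp (-μ * τ) ^ 2 * J Q t₀) :=
      Real.sqrt_le_sqrt hfinal2
    _ = Real.exp (-μ * τ) * Real.sqrt (J Q t₀) := by
      rw [Real.sqrt_mul (sq_nonneg _), Real.sqrt_sq (Real.exp_pos _).le]
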